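/- arXiv:2003.05582 — 4 statements merged into one kernel-verified Lean document; each statement's English description precedes it below -/
import Mathlib

section
/- Let π₀, π₊, π₋, π_i be strictly positive reals with π₀ + π₊ + π₋ + π_i = 1, let y_i ∈ [−1, 1], and suppose the denominator D := (π₊ + π₋ + π_i y_i²) − (π₊ − π₋ + π_i y_i)² is positive. Then (π₊ + π₋ + π_i y_i² + π₀)/D ≥ 1/(1 − π₀), with equality if and only if y_i² = 1 and π₊ − π₋ + π_i y_i = 0. -/
theorem star_lambda_inf_lower_bound (π₀ πp πm πi yi : ℝ)
    (h₀ : 0 < π₀) (hp : 0 < πp) (hm : 0 < πm) (hi : 0 < πi)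
    (hsum : π₀ + πp + πm + πi = 1)
    (hyi : yi ∈ Set.Icc (-1 : ℝ) 1)
    (hD : 0 < (πp + πm + πi * yi ^ 2) - (πp - πm + πi * yi) ^ 2) :
    1 / (1 - π₀) ≤ (πp + πm + πi * yi ^ 2 + π₀) /
        ((πp + πm + πi * yi ^ 2) - (πp - πm + πi * yi) ^ 2) ∧
    ((πp + πm + πi * yi ^ 2 + π₀) /
        ((πp + πm + πi * yi ^ 2) - (πp - πm + πi * yi) ^ 2) = 1 / (1 - π₀) ↔
      yi ^ 2 = 1 ∧ πp - πm + πi * yi = 0) := by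
  obtain ⟨hy1, hy2⟩ := hyi
  have hQ : 0 < 1 - π₀ := by linarith
  have hy2' : yi ^ 2 ≤ 1 := by nlinarith
  have key : (πp + πm + πi * yi ^ 2 + π₀) * (1 - π₀) -
      ((πp + πm + πi * yi ^ 2) - (πp - πm + πi * yi) ^ 2) * 1
      = π₀ * (πi * (1 - yi ^ 2)) + (πp - πm + πi * yi) ^ 2 := by nlinarith
  have hnn : 0 ≤ π₀ * (πi * (1 - yi ^ 2)) := by
    apply mul_nonneg h₀.le
    apply mul_nonneg hi.le
    linarith
  constructor
  · rw [div_le_div_iff₀ hQ hD]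
    nlinarith [sq_nonneg (πp - πm + πi * yi)]
  · rw [div_eq_div_iff hD.ne' hQ.ne']
    constructor
    · intro h
      have h0 : π₀ * (πi * (1 - yi ^ 2)) + (πp - πm + πi * yi) ^ 2 = 0 := by linarith
      have ha := hnn
      have hb : 0 ≤ (πp - πm + πi * yi) ^ 2 := sq_nonneg _
      have h1 : π₀ * (πi * (1 - yi ^ 2)) = 0 := by linarith
      have h2 : (πp - πm + πi * yi) ^ 2 = 0 := by linarith
      constructor
      · have := mul_eq_zero.mp h1
        rcases this with h | h
        · linarith
        · rcases mul_eq_zero.mp h with h | h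
          · linarith
          · linarith
      · exact pow_eq_zero_iff (by norm_num) |>.mp h2
    · rintro ⟨h1, h2⟩
      have h3 : π₀ * (πi * (1 - yi ^ 2)) = 0 := by rw [h1]; ring
      have h4 : (πp - πm + πi * yi) ^ 2 = 0 := by rw [h2]; ring
      linarith
end

section
/- Let π₀, π₊, π₋, π_i be strictly positive reals summing to 1, y_i ∈ [0,1], D := (π₊ + π₋ + π_i y_i²) − (π₊ − π₋ + π_i y_i)² > 0, and suppose |π₊ − π₋ + π_i| ≥ b* for some b* > 0 and y_i² ≥ 1 − b*/3 (so y_i ≥ 1 − b*/3). Then (π₊ + π₋ + π_i y_i² + π₀)/D ≥ 1/(1−π₀) + (b*)²/(3(1−π₀)). -/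
set_option maxHeartbeats 1000000


theorem star_separation_case2 (π₀ πp πm πi yi bstar : ℝ)
    (h₀ : 0 < π₀) (hp : 0 < πp) (hm : 0 < πm) (hi : 0 < πi)
    (hsum : π₀ + πp + πm + πi = 1)
    (hyi : yi ∈ Set.Icc (0 : ℝ) 1)
    (hD : 0 < (πp + πm + πi * yi ^ 2) - (πp - πm + πi * yi) ^ 2)
    (hb : 0 < bstar)
    (himb : bstar ≤ |πp - πm + πi|)
    (hclose : 1 - bstar / 3 ≤ yi ^ 2) :
    1 / (1 - π₀) + bstar ^ 2 / (3 * (1 - π₀)) ≤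
      (πp + πm + πi * yi ^ 2 + π₀) /
        ((πp + πm + πi * yi ^ 2) - (πp - πm + πi * yi) ^ 2) := by
  obtain ⟨hy0, hy1⟩ := hyi
  have hP : 0 < 1 - π₀ := by linarith
  have h1y : 1 - yi ≤ bstar / 3 := by nlinarith
  have hπi1 : πi < 1 := by linarith
  -- b² ≥ (2bstar/3)²
  have hπy : πi * (1 - yi) ≤ bstar / 3 := by
    nlinarith [mul_le_mul_of_nonneg_left h1y hi.le,
      mul_nonneg (by linarith : (0:ℝ) ≤ 1 - πi) hb.le]
  have hb2 : (2 * bstar / 3) ^ 2 ≤ (πp - πm + πi * yi) ^ 2 := by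
    have hny : 0 ≤ πi * (1 - yi) := mul_nonneg hi.le (by linarith)
    rcases abs_cases (πp - πm + πi) with ⟨he, _⟩ | ⟨he, _⟩ <;> rw [he] at himb
    · have h2 : 2 * bstar / 3 ≤ πp - πm + πi * yi := by nlinarith
      nlinarith
    · have h2 : πp - πm + πi * yi ≤ -(2 * bstar / 3) := by nlinarith
      nlinarith
  -- D ≤ 1
  have hD1 : (πp + πm + πi * yi ^ 2) - (πp - πm + πi * yi) ^ 2 ≤ 1 := by
    nlinarith [mul_le_mul_of_nonneg_left (by nlinarith : yi ^ 2 ≤ 1) hi.le, sq_nonneg (πp - πm + πi * yi)]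
  have hid : (πp + πm + πi * yi ^ 2 + π₀) * (1 - π₀)
      = (πp + πm + πi * yi ^ 2) + πi * (1 - yi ^ 2) * π₀ := by
    linear_combination (-π₀) * hsum
  have hεπ : 0 ≤ πi * (1 - yi ^ 2) * π₀ :=
    mul_nonneg (mul_nonneg hi.le (by nlinarith)) h₀.le
  have hbd : bstar ^ 2 / 3 * ((πp + πm + πi * yi ^ 2) - (πp - πm + πi * yi) ^ 2)
      ≤ (πp - πm + πi * yi) ^ 2 := by
    have hm1 := mul_le_mul_of_nonneg_left hD1 (sq_nonneg bstar)
    linarith [hm1, hb2, sq_nonneg bstar]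
  have key : (1 + bstar ^ 2 / 3) * ((πp + πm + πi * yi ^ 2) - (πp - πm + πi * yi) ^ 2)
      ≤ (πp + πm + πi * yi ^ 2 + π₀) * (1 - π₀) := by
    rw [hid]; linarith [hbd, hεπ]
  have hrw : 1 / (1 - π₀) + bstar ^ 2 / (3 * (1 - π₀)) = (1 + bstar ^ 2 / 3) / (1 - π₀) := by
    field_simp
  rw [hrw, div_le_div_iff₀ hP hD]
  linarith [key]
end

section
/- Let π₀, π₊, π₋, π_i be strictly positive reals summing to 1, y_i ∈ [0,1] with y_i² < 1 − ε for some ε > 0, and D := (π₊ + π₋ + π_i y_i²) − (π₊ − π₋ + π_i y_i)² > 0. Then (π₊ + π₋ + π_i y_i² + π₀)/D ≥ 1/(1−π₀) + π₀ π_i ε / (1−π₀)². -/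
theorem star_separation_case1 (π₀ πp πm πi yi ε : ℝ)
    (h₀ : 0 < π₀) (hp : 0 < πp) (hm : 0 < πm) (hi : 0 < πi)
    (hsum : π₀ + πp + πm + πi = 1)
    (hyi : yi ∈ Set.Icc (0 : ℝ) 1)
    (hε : 0 < ε)
    (hfar : yi ^ 2 < 1 - ε)
    (hD : 0 < (πp + πm + πi * yi ^ 2) - (πp - πm + πi * yi) ^ 2) :
    1 / (1 - π₀) + π₀ * πi * ε / (1 - π₀) ^ 2 ≤
      (πp + πm + πi * yi ^ 2 + π₀) /
        ((πp + πm + πi * yi ^ 2) - (πp - πm + πi * yi) ^ 2) := by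
  set S := πp + πm + πi * yi ^ 2 with hSdef
  have ha : 0 < 1 - π₀ := by linarith
  have hS : 0 < S := by nlinarith [sq_nonneg (πp - πm + πi * yi)]
  have hT : S ≤ (1 - π₀) - πi * ε := by nlinarith
  have step1 : (S + π₀) / S ≤ (S + π₀) /
      (S - (πp - πm + πi * yi) ^ 2) := by
    gcongr
    nlinarith [sq_nonneg (πp - πm + πi * yi)]
  refine le_trans ?_ step1
  rw [div_add_div _ _ (by positivity) (by positivity), div_le_div_iff₀ (by positivity) hS]
  have key : S * ((1 - π₀) + πi * ε) ≤ (1 - π₀) ^ 2 := by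
    nlinarith [sq_nonneg (πi * ε), mul_nonneg (sub_nonneg.mpr hT)
      (by positivity : (0:ℝ) ≤ (1 - π₀) + πi * ε)]
  nlinarith [mul_le_mul_of_nonneg_left key (mul_nonneg ha.le h₀.le)]
end

section
/- Let V be a finite set partitioned into disjoint nonempty sets A₁,…,A_m, π a probability distribution on V with π(A_i) > 0 for all i, and y, y' : V → ℝᵈ two maps such that ‖y_u − y_v‖ = ‖y'_u − y'_v‖ for all u, v in the same part A_i. Let μ_y(A_i) = ∑_{v∈A_i} (π_v/π(A_i)) y_v and similarly μ_{y'}(A_i). Then Var_π(y) − Var_π(y') = ∑_{i<j} π(A_i) π(A_j) (‖μ_y(A_i) − μ_y(A_j)‖² − ‖μ_{y'}(A_i) − μ_{y'}(A_j)‖²). -/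
/-!
Law of total variance: the variance of `y` is the sum of the within-part variances, weighted by
`π(A i)`, and the variance of the part means `μ_y(A i)` under the weights `π(A i)`. Each
within-part variance equals `(2 π(A i)²)⁻¹ ∑_{u, v ∈ A i} π u π v ‖y u - y v‖²`, so it is the same
for `y` and `y'`; and the between-part variance is `∑_{i < j} π(A i) π(A j) ‖μ_y(A i) - μ_y(A j)‖²`.
-/

open Finset Function

section InnerProductSpace

variable {ι E : Type*} [NormedAddCommGroup E] [InnerProductSpace ℝ E]

theorem sum_sum_mul_mul_norm_sub_sq (s : Finset ι) (w : ι → ℝ) (y : ι → E) :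
    ∑ u ∈ s, ∑ v ∈ s, w u * w v * ‖y u - y v‖ ^ 2 =
      2 * (∑ v ∈ s, w v) * (∑ v ∈ s, w v * ‖y v‖ ^ 2) - 2 * ‖∑ v ∈ s, w v • y v‖ ^ 2 := by
  have hnorm : ‖∑ v ∈ s, w v • y v‖ ^ 2 = ∑ u ∈ s, ∑ v ∈ s, w u * w v * inner ℝ (y u) (y v) := by
    rw [← real_inner_self_eq_norm_sq, sum_inner]
    refine sum_congr rfl fun u _ => ?_
    simp only [inner_sum, real_inner_smul_left, real_inner_smul_right]
    exact sum_congr rfl fun v _ => by ring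
  have expand : ∀ u v, w u * w v * ‖y u - y v‖ ^ 2 =
      (w u * ‖y u‖ ^ 2) * w v + w u * (w v * ‖y v‖ ^ 2)
        - 2 * (w u * w v * inner ℝ (y u) (y v)) := by
    intro u v
    rw [norm_sub_sq_real]
    ring
  simp only [expand, sum_sub_distrib, sum_add_distrib, ← sum_mul, ← mul_sum]
  rw [hnorm]
  ring

theorem sum_mul_norm_sub_sum_smul_sq [Fintype ι] (w : ι → ℝ) (hw : ∑ v, w v = 1) (y : ι → E) :
    ∑ v, w v * ‖y v - ∑ u, w u • y u‖ ^ 2 = ∑ v, w v * ‖y v‖ ^ 2 - ‖∑ u, w u • y u‖ ^ 2 := by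
  set μ := ∑ u, w u • y u
  have hinner : ∑ v, w v * inner ℝ (y v) μ = ‖μ‖ ^ 2 := by
    simp only [← real_inner_self_eq_norm_sq, μ, sum_inner, real_inner_smul_left]
  have expand : ∀ v, w v * ‖y v - μ‖ ^ 2 =
      w v * ‖y v‖ ^ 2 - 2 * (w v * inner ℝ (y v) μ) + w v * ‖μ‖ ^ 2 := by
    intro v
    rw [norm_sub_sq_real]
    ring
  simp only [expand, sum_add_distrib, sum_sub_distrib, ← mul_sum, ← sum_mul]
  rw [hinner, hw]
  ring

theorem sum_mul_norm_sq_eq_pairwise_add_centerMass (s : Finset ι) (w : ι → ℝ)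
    (hw : ∑ v ∈ s, w v ≠ 0) (y : ι → E) :
    ∑ v ∈ s, w v * ‖y v‖ ^ 2 =
      (2 * ∑ v ∈ s, w v)⁻¹ * ∑ u ∈ s, ∑ v ∈ s, w u * w v * ‖y u - y v‖ ^ 2 +
        (∑ v ∈ s, w v) * ‖s.centerMass w y‖ ^ 2 := by
  rw [sum_sum_mul_mul_norm_sub_sq, Finset.centerMass, norm_smul, mul_pow, Real.norm_eq_abs,
    sq_abs]
  field_simp
  ring

end InnerProductSpace

theorem Finset.sum_sum_eq_two_nsmul_sum_sum_filter_lt {ι M : Type*} [Fintype ι] [LinearOrder ι]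
    [AddCommMonoid M] (F : ι → ι → M) (hsymm : ∀ i j, F i j = F j i) (hdiag : ∀ i, F i i = 0) :
    ∑ i, ∑ j, F i j = 2 • ∑ i, ∑ j ∈ univ.filter (i < ·), F i j := by
  have split : ∀ i j, F i j = (if i < j then F i j else 0) + (if j < i then F j i else 0) := by
    intro i j
    rcases lt_trichotomy i j with h | rfl | h
    · simp [h, h.not_gt]
    · simp [hdiag]
    · simp [h, h.not_gt, hsymm i j]
  simp only [sum_filter]
  calc ∑ i, ∑ j, F i j
      = ∑ i, ∑ j, (if i < j then F i j else 0) + ∑ i, ∑ j, (if j < i then F j i else 0) := by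
        simp only [← sum_add_distrib, ← split]
    _ = 2 • ∑ i, ∑ j, (if i < j then F i j else 0) := by
        rw [sum_comm (f := fun i j => if j < i then F j i else 0), two_nsmul]

theorem Finset.sum_univ_eq_sum_sum_of_cover {V ι M : Type*} [Fintype V] [Fintype ι]
    [AddCommMonoid M] (A : ι → Finset V) (hdisj : Pairwise (Disjoint on A))
    (hcover : ∀ v, ∃ i, v ∈ A i) (f : V → M) :
    ∑ v, f v = ∑ i, ∑ v ∈ A i, f v := by
  classical
  have huniv : (univ : Finset V) = univ.biUnion A := by
    ext v
    simpa using hcover v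
  rw [huniv, sum_biUnion fun i _ j _ hij => hdisj hij]

theorem sum_mul_norm_sub_sum_smul_sq_eq_within_add_between {V ι E : Type*} [Fintype V]
    [Fintype ι] [LinearOrder ι] [NormedAddCommGroup E] [InnerProductSpace ℝ E]
    (π : V → ℝ) (hsum : ∑ v, π v = 1) (A : ι → Finset V) (hdisj : Pairwise (Disjoint on A))
    (hcover : ∀ v, ∃ i, v ∈ A i) (hpos : ∀ i, ∑ v ∈ A i, π v ≠ 0) (y : V → E) :
    ∑ v, π v * ‖y v - ∑ u, π u • y u‖ ^ 2 =
      ∑ i, (2 * ∑ v ∈ A i, π v)⁻¹ * ∑ u ∈ A i, ∑ v ∈ A i, π u * π v * ‖y u - y v‖ ^ 2 +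
        ∑ i, ∑ j ∈ univ.filter (i < ·), (∑ v ∈ A i, π v) * (∑ v ∈ A j, π v) *
          ‖(A i).centerMass π y - (A j).centerMass π y‖ ^ 2 := by
  set p : ι → ℝ := fun i => ∑ v ∈ A i, π v
  set c : ι → E := fun i => (A i).centerMass π y
  have hp : ∑ i, p i = 1 := by
    rw [← sum_univ_eq_sum_sum_of_cover A hdisj hcover, hsum]
  have hmean : ∑ u, π u • y u = ∑ i, p i • c i := by
    rw [sum_univ_eq_sum_sum_of_cover A hdisj hcover]
    exact sum_congr rfl fun i _ => (smul_inv_smul₀ (hpos i) _).symm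
  have hbetween : ∑ i, ∑ j ∈ univ.filter (i < ·), p i * p j * ‖c i - c j‖ ^ 2 =
      ∑ i, p i * ‖c i‖ ^ 2 - ‖∑ i, p i • c i‖ ^ 2 := by
    have h := sum_sum_eq_two_nsmul_sum_sum_filter_lt (fun i j => p i * p j * ‖c i - c j‖ ^ 2)
      (fun i j => by rw [norm_sub_rev, mul_comm (p i)]) (fun i => by simp)
    rw [sum_sum_mul_mul_norm_sub_sq, hp, two_nsmul] at h
    linarith
  rw [sum_mul_norm_sub_sum_smul_sq π hsum, sum_univ_eq_sum_sum_of_cover A hdisj hcover,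
    sum_congr rfl fun i _ => sum_mul_norm_sq_eq_pairwise_add_centerMass (A i) π (hpos i) y,
    sum_add_distrib, hbetween, hmean]
  ring

open Finset in
theorem variance_diff_partwise_isometry_general {V : Type*} [Fintype V] (d m : ℕ)
    (π : V → ℝ) (hsum : ∑ v, π v = 1)
    (A : Fin m → Finset V)
    (hdisj : ∀ i j, i ≠ j → Disjoint (A i) (A j))
    (hcover : ∀ v : V, ∃ i, v ∈ A i)
    (hpos : ∀ i, 0 < ∑ v ∈ A i, π v)
    (y y' : V → EuclideanSpace ℝ (Fin d))
    (hiso : ∀ i, ∀ u ∈ A i, ∀ v ∈ A i, ‖y u - y v‖ = ‖y' u - y' v‖) :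
    (∑ v, π v * ‖y v - ∑ u, π u • y u‖ ^ 2) -
      (∑ v, π v * ‖y' v - ∑ u, π u • y' u‖ ^ 2) =
    ∑ i, ∑ j ∈ univ.filter (fun j => i < j),
      (∑ v ∈ A i, π v) * (∑ v ∈ A j, π v) *
        (‖((∑ v ∈ A i, π v)⁻¹ • ∑ v ∈ A i, π v • y v) -
            ((∑ v ∈ A j, π v)⁻¹ • ∑ v ∈ A j, π v • y v)‖ ^ 2 -
         ‖((∑ v ∈ A i, π v)⁻¹ • ∑ v ∈ A i, π v • y' v) -
            ((∑ v ∈ A j, π v)⁻¹ • ∑ v ∈ A j, π v • y' v)‖ ^ 2) := by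
  have hdisj' : Pairwise (Disjoint on A) := fun i j hij => hdisj i j hij
  have hpos' : ∀ i, ∑ v ∈ A i, π v ≠ 0 := fun i => (hpos i).ne'
  have hwithin : ∀ i, ∑ u ∈ A i, ∑ v ∈ A i, π u * π v * ‖y u - y v‖ ^ 2 =
      ∑ u ∈ A i, ∑ v ∈ A i, π u * π v * ‖y' u - y' v‖ ^ 2 := fun i =>
    sum_congr rfl fun u hu => sum_congr rfl fun v hv => by rw [hiso i u hu v hv]
  rw [sum_mul_norm_sub_sum_smul_sq_eq_within_add_between π hsum A hdisj' hcover hpos' y,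
    sum_mul_norm_sub_sum_smul_sq_eq_within_add_between π hsum A hdisj' hcover hpos' y',
    sum_congr rfl fun i _ => by rw [hwithin i], add_sub_add_left_eq_sub, ← sum_sub_distrib]
  refine sum_congr rfl fun i _ => ?_
  rw [← sum_sub_distrib]
  -- the part means in the statement are `Finset.centerMass` unfolded
  exact sum_congr rfl fun j _ => (mul_sub _ _ _).symm

open Finset in
theorem variance_diff_partwise_isometry {V : Type*} [Fintype V] (d m : ℕ)
    (π : V → ℝ) (hπ : ∀ v, 0 ≤ π v) (hsum : ∑ v, π v = 1)
    (A : Fin m → Finset V)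
    (hdisj : ∀ i j, i ≠ j → Disjoint (A i) (A j))
    (hne : ∀ i, (A i).Nonempty)
    (hcover : ∀ v : V, ∃ i, v ∈ A i)
    (hpos : ∀ i, 0 < ∑ v ∈ A i, π v)
    (y y' : V → EuclideanSpace ℝ (Fin d))
    (hiso : ∀ i, ∀ u ∈ A i, ∀ v ∈ A i, ‖y u - y v‖ = ‖y' u - y' v‖) :
    (∑ v, π v * ‖y v - ∑ u, π u • y u‖ ^ 2) -
      (∑ v, π v * ‖y' v - ∑ u, π u • y' u‖ ^ 2) =
    ∑ i, ∑ j ∈ univ.filter (fun j => i < j),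
      (∑ v ∈ A i, π v) * (∑ v ∈ A j, π v) *
        (‖((∑ v ∈ A i, π v)⁻¹ • ∑ v ∈ A i, π v • y v) -
            ((∑ v ∈ A j, π v)⁻¹ • ∑ v ∈ A j, π v • y v)‖ ^ 2 -
         ‖((∑ v ∈ A i, π v)⁻¹ • ∑ v ∈ A i, π v • y' v) -
            ((∑ v ∈ A j, π v)⁻¹ • ∑ v ∈ A j, π v • y' v)‖ ^ 2) :=
  variance_diff_partwise_isometry_general d m π hsum A hdisj hcover hpos y y' hiso
end
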